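/- Let N ≥ 2 and λ > 2/(N−1). For any thresholds τ_1,…,τ_{N−1} ∈ ℤ₊, define g(k) = ∑_{j=1}^{N−1} ∑_{m=0}^{τ_j} 2^{-(m+k+1)} C(k+m,k) − (k+1)/λ. Then g(0) > 0, g is strictly decreasing, and g(k) < 0 for all sufficiently large k; hence the set {k : g(k) > 0} is a nonempty finite initial segment of ℤ₊ with a well-defined maximum. -/

import Mathlib

/-!
Given `Y_i = k`, the predictive law of `Y_j` is negative binomial with `k + 1` successes at
`p = 1/2`, so the aggregate belief is a sum of negative binomial distribution functions
`F_k(τ_j)`. Pascal's rule gives `F_{k+1}(T) ≤ F_k(T)`, while the posterior mean `(k+1)/λ` grows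
by `1/λ` at each step; hence `g(k+1) ≤ g(k) - 1/λ` and `g` decreases to `-∞`. At `k = 0` each
`F_0(τ_j) ≥ 1/2`, so `g(0) ≥ (N-1)/2 - 1/λ > 0`.
-/

open Finset Filter

/-- `P(X ≤ T)` for `X` negative binomial (failures before the `k+1`-st success) with `p = 1/2`. -/
noncomputable def negBinomialCDF (k T : ℕ) : ℝ :=
  ∑ m ∈ range (T + 1), ((k + m).choose k : ℝ) / 2 ^ (m + k + 1)

lemma negBinomialCDF_succ_right (k T : ℕ) :
    negBinomialCDF k (T + 1) =
      negBinomialCDF k T + ((k + T + 1).choose k : ℝ) / 2 ^ (k + T + 2) := by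
  rw [negBinomialCDF, negBinomialCDF, sum_range_succ, show k + (T + 1) = k + T + 1 by ring,
    show T + 1 + k + 1 = k + T + 2 by ring]

lemma negBinomialCDF_succ_add (k T : ℕ) :
    negBinomialCDF (k + 1) T + ((k + T + 1).choose (k + 1) : ℝ) / 2 ^ (k + T + 2) =
      negBinomialCDF k T := by
  induction T with
  | zero =>
    simp only [negBinomialCDF, zero_add, range_one, sum_singleton, add_zero, Nat.choose_self,
      Nat.cast_one]
    ring
  | succ T ih =>
    have pascal : ((k + T + 2).choose (k + 1) : ℝ) =
        (k + T + 1).choose k + (k + T + 1).choose (k + 1) := by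
      exact_mod_cast Nat.choose_succ_succ (k + T + 1) k
    rw [negBinomialCDF_succ_right, negBinomialCDF_succ_right, ← ih,
      show k + 1 + T + 1 = k + T + 2 by ring, show k + 1 + T + 2 = k + T + 3 by ring,
      show k + (T + 1) + 1 = k + T + 2 by ring, show k + (T + 1) + 2 = k + T + 3 by ring, pascal]
    ring

lemma negBinomialCDF_succ_le (k T : ℕ) : negBinomialCDF (k + 1) T ≤ negBinomialCDF k T := by
  rw [← negBinomialCDF_succ_add k T]
  exact le_add_of_nonneg_right (by positivity)

lemma half_le_negBinomialCDF_zero (T : ℕ) : 1 / 2 ≤ negBinomialCDF 0 T := by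
  have h := single_le_sum (f := fun m : ℕ => ((0 + m).choose 0 : ℝ) / 2 ^ (m + 0 + 1))
    (fun _ _ => by positivity) (mem_range.2 T.succ_pos)
  simpa [negBinomialCDF] using h

lemma sum_negBinomialCDF_succ_le {ι : Type*} [Fintype ι] (τ : ι → ℕ) (k : ℕ) :
    ∑ j, negBinomialCDF (k + 1) (τ j) ≤ ∑ j, negBinomialCDF k (τ j) :=
  sum_le_sum fun j _ => negBinomialCDF_succ_le k (τ j)

lemma card_div_two_le_sum_negBinomialCDF_zero {ι : Type*} [Fintype ι] (τ : ι → ℕ) :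
    (Fintype.card ι : ℝ) / 2 ≤ ∑ j, negBinomialCDF 0 (τ j) :=
  calc (Fintype.card ι : ℝ) / 2 = ∑ _j : ι, (1 / 2 : ℝ) := by
        rw [sum_const, card_univ, nsmul_eq_mul]
        ring
    _ ≤ _ := sum_le_sum fun j _ => half_le_negBinomialCDF_zero (τ j)

lemma zpow_neg_mul_choose (k m : ℕ) :
    (2 : ℝ) ^ (-((m : ℤ) + k + 1)) * ((k + m).choose k : ℝ) =
      ((k + m).choose k : ℝ) / 2 ^ (m + k + 1) := by
  rw [show -((m : ℤ) + k + 1) = -((m + k + 1 : ℕ) : ℤ) by push_cast; ring, zpow_neg,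
    zpow_natCast, div_eq_inv_mul]

lemma tendsto_atBot_of_succ_le_sub {g : ℕ → ℝ} {c : ℝ} (hc : 0 < c)
    (hg : ∀ k, g (k + 1) ≤ g k - c) : Tendsto g atTop atBot := by
  have linear_bound : ∀ k : ℕ, g k ≤ g 0 + -(k * c) := by
    intro k
    induction k with
    | zero => simp
    | succ k ih =>
      push_cast
      linarith [hg k]
  refine tendsto_atBot_mono linear_bound (tendsto_atBot_add_const_left _ _ ?_)
  exact tendsto_neg_atTop_atBot.comp (tendsto_natCast_atTop_atTop.atTop_mul_const hc)

theorem finite_best_response_threshold (N : ℕ) (hN : 2 ≤ N) (l : ℝ)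
    (hl : 2 / ((N : ℝ) - 1) < l) (τ : Fin (N - 1) → ℕ) :
    let g : ℕ → ℝ := fun k =>
      (∑ j : Fin (N - 1), ∑ m ∈ Finset.range (τ j + 1),
        (2 : ℝ) ^ (-((m : ℤ) + k + 1)) * ((k + m).choose k)) - ((k : ℝ) + 1) / l
    0 < g 0 ∧ StrictAnti g ∧ (∃ K : ℕ, ∀ k ≥ K, g k < 0) ∧
      {k : ℕ | 0 < g k}.Finite ∧ {k : ℕ | 0 < g k}.Nonempty ∧
      (∀ k, 0 < g k → ∀ j ≤ k, 0 < g j) := by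
  intro g
  have hg : ∀ k, g k = ∑ j, negBinomialCDF k (τ j) - ((k : ℝ) + 1) / l := fun k => by
    simp only [g, negBinomialCDF, zpow_neg_mul_choose]
  have hN1 : (0 : ℝ) < N - 1 := by
    have : (2 : ℝ) ≤ N := by exact_mod_cast hN
    linarith
  have hl0 : 0 < l := lt_trans (by positivity) hl
  have hstep : ∀ k, g (k + 1) ≤ g k - 1 / l := fun k => by
    rw [hg, hg, Nat.cast_succ, add_div _ (1 : ℝ)]
    linarith [sum_negBinomialCDF_succ_le τ k]
  have hg0 : 0 < g 0 := by
    have hsum := card_div_two_le_sum_negBinomialCDF_zero τ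
    rw [Fintype.card_fin, Nat.cast_sub (by omega : 1 ≤ N), Nat.cast_one] at hsum
    have : 1 / l < ((N : ℝ) - 1) / 2 := (one_div_lt hl0 (half_pos hN1)).2 (by rwa [one_div_div])
    rw [hg, Nat.cast_zero, zero_add]
    linarith
  have hanti : StrictAnti g :=
    strictAnti_nat_of_succ_lt fun k => by linarith [hstep k, one_div_pos.2 hl0]
  obtain ⟨K, hK⟩ : ∃ K : ℕ, ∀ k ≥ K, g k < 0 := eventually_atTop.1 <|
    (tendsto_atBot_of_succ_le_sub (one_div_pos.2 hl0) hstep).eventually_lt_atBot 0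
  refine ⟨hg0, hanti, ⟨K, hK⟩, (Set.finite_Iio K).subset fun k hk => ?_, ⟨0, hg0⟩,
    fun k hk j hj => hk.trans_le (hanti.antitone hj)⟩
  by_contra hkK
  exact (hK k (not_lt.1 hkK)).not_gt hk
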